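/- arXiv:1211.0507 — 2 statements merged into one kernel-verified Lean document; each statement's English description precedes it below -/
import Mathlib

section
/- Let μ⁺, μ⁻ be given by a 2-additive decomposition and let μ̂(C,D) = μ⁺(C,D) − μ⁻(C,D) for all (C,D) ∈ P(J). Then Ch^B(x,μ̂) = −Ch^B(−x,μ̂) for all x ∈ [−1,1]^n if and only if: (1) a_j⁺ = a_j⁻ for every j ∈ J; (2) a_{jk}⁺ = a_{jk}⁻ for every unordered pair {j,k} ⊆ J; and (3) a⁺_{j|k} − a⁻_{j|k} = a⁻_{k|j} − a⁺_{k|j} for every ordered pair (j,k) with j ≠ k. -/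
/-!
Negating `x` swaps the two level sets, so `Ch^B(-x, μ) = Ch^B(x, μᵀ)` with `μᵀ(C,D) = μ(D,C)`.
For `t ≥ 0` the level sets are disjoint, hence `μ(C,D) = -μ(D,C)` on `P(J)` makes `Ch^B` odd;
conversely `Ch^B` evaluates to `μ(C,D)` at the ternary vector `1_C - 1_D`.
For the 2-additive `μ̂`, the sum `μ̂(C,D) + μ̂(D,C)` is again 2-additive, with coefficients
`a_j⁺ - a_j⁻`, `a_{jk}⁺ - a_{jk}⁻` and `a⁺_{j|k} - a⁻_{j|k} + a⁺_{k|j} - a⁻_{k|j}`,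
and its values at `({j},∅)`, `({j,k},∅)`, `({j},{k})` force all of them to vanish.
-/

open MeasureTheory Finset

/-- The bipolar Choquet integral of `x` with respect to `μ`:
`∫₀¹ μ({j : x j > t}, {j : x j < -t}) dt`. The same formula is used for
`Ch^B`, `Ch^{B+}` and `Ch^{B-}` (with `μ̂`, `μ⁺`, `μ⁻` respectively). -/
noncomputable def ChB {n : ℕ} (μ : Finset (Fin n) → Finset (Fin n) → ℝ)
    (x : Fin n → ℝ) : ℝ :=
  ∫ t in (0:ℝ)..1,
    μ (Finset.univ.filter (fun j => t < x j)) (Finset.univ.filter (fun j => x j < -t))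

/-- Sum of a symmetric coefficient family over the unordered pairs `{j,k} ⊆ C`, `j ≠ k`. -/
noncomputable def pairSum {n : ℕ} (a : Fin n → Fin n → ℝ) (C : Finset (Fin n)) : ℝ :=
  (∑ p ∈ C.offDiag, a p.1 p.2) / 2

/-- `μ⁺(C,D) = Σ_{j∈C} a_j⁺ + Σ_{{j,k}⊆C} a_{jk}⁺ + Σ_{j∈C,k∈D} a⁺_{j|k}`. -/
noncomputable def muPlus {n : ℕ} (ap : Fin n → ℝ) (aps apo : Fin n → Fin n → ℝ)
    (C D : Finset (Fin n)) : ℝ :=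
  ∑ j ∈ C, ap j + pairSum aps C + ∑ j ∈ C, ∑ k ∈ D, apo j k

/-- `μ⁻(C,D) = Σ_{j∈D} a_j⁻ + Σ_{{j,k}⊆D} a_{jk}⁻ + Σ_{j∈C,k∈D} a⁻_{j|k}`. -/
noncomputable def muMinus {n : ℕ} (am : Fin n → ℝ) (ams amo : Fin n → Fin n → ℝ)
    (C D : Finset (Fin n)) : ℝ :=
  ∑ j ∈ D, am j + pairSum ams D + ∑ j ∈ C, ∑ k ∈ D, amo j k

section ChoquetIntegral

variable {n : ℕ}

lemma ChB_neg (μ : Finset (Fin n) → Finset (Fin n) → ℝ) (x : Fin n → ℝ) :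
    ChB μ (-x) = ChB (fun C D => μ D C) x := by
  simp only [ChB, Pi.neg_apply, lt_neg, neg_lt_neg_iff]

def signIndicator (C D : Finset (Fin n)) (j : Fin n) : ℝ :=
  if j ∈ C then 1 else if j ∈ D then -1 else 0

lemma signIndicator_mem_Icc (C D : Finset (Fin n)) (j : Fin n) :
    signIndicator C D j ∈ Set.Icc (-1 : ℝ) 1 := by
  unfold signIndicator
  split_ifs <;> norm_num

lemma ChB_signIndicator (μ : Finset (Fin n) → Finset (Fin n) → ℝ) {C D : Finset (Fin n)}
    (hCD : Disjoint C D) : ChB μ (signIndicator C D) = μ C D := by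
  have level_sets : ∀ t ∈ Set.Ioo (0 : ℝ) 1,
      univ.filter (fun j => t < signIndicator C D j) = C ∧
        univ.filter (fun j => signIndicator C D j < -t) = D := by
    rintro t ⟨ht0, ht1⟩
    constructor <;> ext j <;> simp only [mem_filter, mem_univ, true_and]
      <;> by_cases hC : j ∈ C <;> by_cases hD : j ∈ D
      <;> simp only [signIndicator, hC, hD, ↓reduceIte, iff_true, iff_false, not_lt]
      <;> first | linarith | exact absurd hD (disjoint_left.1 hCD hC)
  rw [ChB, intervalIntegral.integral_of_le zero_le_one, integral_Ioc_eq_integral_Ioo,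
    setIntegral_congr_fun measurableSet_Ioo (g := fun _ => μ C D)
      fun t ht => by rw [(level_sets t ht).1, (level_sets t ht).2]]
  simp

theorem ChB_eq_neg_ChB_neg_iff (μ : Finset (Fin n) → Finset (Fin n) → ℝ) :
    (∀ x : Fin n → ℝ, (∀ j, x j ∈ Set.Icc (-1:ℝ) 1) → ChB μ x = -ChB μ (-x)) ↔
      ∀ C D, Disjoint C D → μ C D = -μ D C := by
  constructor
  · intro h C D hCD
    simpa [ChB_neg, ChB_signIndicator _ hCD] using
      h (signIndicator C D) (signIndicator_mem_Icc C D)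
  · intro h x _
    have : ChB (fun C D => μ D C) x = ChB (fun C D => -μ C D) x :=
      intervalIntegral.integral_congr fun t ht => by
        rw [Set.uIcc_of_le zero_le_one] at ht
        have hdisj :
            Disjoint (univ.filter (fun j => t < x j)) (univ.filter (fun j => x j < -t)) :=
          disjoint_filter.2 fun j _ h1 h2 => by linarith [ht.1]
        simp only [h _ _ hdisj, neg_neg]
    rw [ChB_neg, this]
    simp only [ChB, intervalIntegral.integral_neg, neg_neg]

end ChoquetIntegral

section TwoAdditive

variable {n : ℕ}

lemma pairSum_sub (a b : Fin n → Fin n → ℝ) (C : Finset (Fin n)) :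
    pairSum (a - b) C = pairSum a C - pairSum b C := by
  simp only [pairSum, Pi.sub_apply, sum_sub_distrib, sub_div]

@[simp] lemma pairSum_empty (a : Fin n → Fin n → ℝ) : pairSum a ∅ = 0 := by
  simp [pairSum]

@[simp] lemma pairSum_singleton (a : Fin n → Fin n → ℝ) (j : Fin n) : pairSum a {j} = 0 := by
  simp [pairSum]

lemma pairSum_pair (a : Fin n → Fin n → ℝ) {j k : Fin n} (hjk : j ≠ k) :
    pairSum a {j, k} = (a j k + a k j) / 2 := by
  have : ({j, k} : Finset (Fin n)).offDiag = {(j, k), (k, j)} := by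
    ext ⟨p, q⟩
    simp only [mem_offDiag, mem_insert, mem_singleton, Prod.mk.injEq]
    grind
  rw [pairSum, this, sum_pair (by simp [hjk])]

lemma pairSum_eq_zero {a : Fin n → Fin n → ℝ} (ha : ∀ j k, j ≠ k → a j k = 0)
    (C : Finset (Fin n)) : pairSum a C = 0 := by
  rw [pairSum, sum_eq_zero fun p hp => ha _ _ (mem_offDiag.1 hp).2.2, zero_div]

variable (ap am : Fin n → ℝ) (aps ams apo amo : Fin n → Fin n → ℝ)

lemma muPlus_sub_muMinus_add_swap (C D : Finset (Fin n)) :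
    muPlus ap aps apo C D - muMinus am ams amo C D
        + (muPlus ap aps apo D C - muMinus am ams amo D C) =
      ∑ j ∈ C, (ap j - am j) + ∑ j ∈ D, (ap j - am j)
        + pairSum (aps - ams) C + pairSum (aps - ams) D
        + ∑ j ∈ C, ∑ k ∈ D, (apo j k - amo j k + (apo k j - amo k j)) := by
  simp only [muPlus, muMinus, pairSum_sub, sum_sub_distrib, sum_add_distrib]
  rw [sum_comm (s := D), sum_comm (s := D)]
  ring

theorem muPlus_sub_muMinus_antisymm_iff
    (hsymp : ∀ j k, aps j k = aps k j) (hsymm : ∀ j k, ams j k = ams k j) :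
    (∀ C D, Disjoint C D →
        muPlus ap aps apo C D - muMinus am ams amo C D =
          -(muPlus ap aps apo D C - muMinus am ams amo D C)) ↔
      ((∀ j, ap j = am j) ∧
       (∀ j k, j ≠ k → aps j k = ams j k) ∧
       (∀ j k, j ≠ k → apo j k - amo j k = amo k j - apo k j)) := by
  simp_rw [eq_neg_iff_add_eq_zero, muPlus_sub_muMinus_add_swap]
  constructor
  · intro h
    have h1 : ∀ j, ap j = am j := fun j => by
      simpa [sub_eq_zero] using h {j} ∅ (disjoint_empty_right _)
    refine ⟨h1, fun j k hjk => ?_, fun j k hjk => ?_⟩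
    · have := h {j, k} ∅ (disjoint_empty_right _)
      simp only [h1, sub_self, sum_pair hjk, pairSum_pair _ hjk, Pi.sub_apply, sum_const_zero,
        pairSum_empty, sum_empty, add_zero, zero_add] at this
      linarith [hsymp j k, hsymm j k]
    · have := h {j} {k} (disjoint_singleton.2 hjk)
      simp only [h1, sub_self, sum_const_zero, pairSum_singleton, sum_singleton, add_zero,
        zero_add] at this
      linarith
  · rintro ⟨h1, h2, h3⟩ C D hCD
    have hs : ∀ j k, j ≠ k → (aps - ams) j k = 0 := fun j k hjk => sub_eq_zero.2 (h2 j k hjk)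
    rw [pairSum_eq_zero hs, pairSum_eq_zero hs,
      sum_eq_zero fun j _ => sub_eq_zero.2 (h1 j), sum_eq_zero fun j _ => sub_eq_zero.2 (h1 j),
      sum_eq_zero fun j hj => sum_eq_zero fun k hk => ?_]
    · ring
    · have hjk : j ≠ k := fun hjk => disjoint_left.1 hCD hj (hjk ▸ hk)
      linarith [h3 j k hjk]

end TwoAdditive

theorem stmt_10_general {n : ℕ}
    (ap am : Fin n → ℝ) (aps ams apo amo : Fin n → Fin n → ℝ)
    (hsymp : ∀ j k, aps j k = aps k j) (hsymm : ∀ j k, ams j k = ams k j) :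
    (∀ x : Fin n → ℝ, (∀ j, x j ∈ Set.Icc (-1:ℝ) 1) →
        ChB (fun C D => muPlus ap aps apo C D - muMinus am ams amo C D) x =
          -ChB (fun C D => muPlus ap aps apo C D - muMinus am ams amo C D) (-x)) ↔
    ((∀ j, ap j = am j) ∧
     (∀ j k, j ≠ k → aps j k = ams j k) ∧
     (∀ j k, j ≠ k → apo j k - amo j k = amo k j - apo k j)) :=
  (ChB_eq_neg_ChB_neg_iff _).trans
    (muPlus_sub_muMinus_antisymm_iff ap am aps ams apo amo hsymp hsymm)

theorem stmt_10 {n : ℕ} (hn : 1 ≤ n)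
    (ap am : Fin n → ℝ) (aps ams apo amo : Fin n → Fin n → ℝ)
    (hap : ∀ j, 0 ≤ ap j) (ham : ∀ j, 0 ≤ am j)
    (hsymp : ∀ j k, aps j k = aps k j) (hsymm : ∀ j k, ams j k = ams k j)
    (hapo : ∀ j k, j ≠ k → apo j k ≤ 0) (hamo : ∀ j k, j ≠ k → amo j k ≤ 0) :
    (∀ x : Fin n → ℝ, (∀ j, x j ∈ Set.Icc (-1:ℝ) 1) →
        ChB (fun C D => muPlus ap aps apo C D - muMinus am ams amo C D) x =
          -ChB (fun C D => muPlus ap aps apo C D - muMinus am ams amo C D) (-x)) ↔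
    ((∀ j, ap j = am j) ∧
     (∀ j k, j ≠ k → aps j k = ams j k) ∧
     (∀ j k, j ≠ k → apo j k - amo j k = amo k j - apo k j)) :=
  stmt_10_general ap am aps ams apo amo hsymp hsymm
end

section
/- Let μ⁺, μ⁻ be given by a 2-additive decomposition, and let μ̂(C,D) = μ⁺(C,D) − μ⁻(C,D). Assume that a_j⁺ + Σ_{k∈C} a_{jk}⁺ + Σ_{k∈D} a⁺_{j|k} ≥ 0 for all j ∈ J and all (C∪{j},D) ∈ P(J) with j ∉ C, and that a_j⁻ + Σ_{k∈D} a_{jk}⁻ + Σ_{k∈C} a⁻_{k|j} ≥ 0 for all j ∈ J and all (C,D∪{j}) ∈ P(J) with j ∉ D. Then μ̂ is monotone on P(J): for all (C,D),(E,F) ∈ P(J) with C ⊇ E and D ⊆ F, μ̂(C,D) ≥ μ̂(E,F). -/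
open Finset

theorem Finset.le_of_subset_of_le_insert {α β : Type*} [DecidableEq α] [Preorder β]
    {f : Finset α → β} {s t : Finset α} (hst : s ⊆ t)
    (hf : ∀ a u, s ⊆ u → u ⊆ t → a ∈ t → a ∉ u → f u ≤ f (insert a u)) : f s ≤ f t := by
  suffices h : ∀ r ⊆ t \ s, f s ≤ f (s ∪ r) by
    simpa [union_sdiff_of_subset hst] using h (t \ s) subset_rfl
  intro r hr
  induction r using Finset.induction_on with
  | empty => simp
  | insert a r ha ih =>
    obtain ⟨hat, hrt⟩ := insert_subset_iff.1 hr
    rw [union_insert]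
    refine (ih hrt).trans (hf a _ subset_union_left ?_ (mem_sdiff.1 hat).1 ?_)
    · exact union_subset hst (hrt.trans sdiff_subset)
    · simp [ha, (mem_sdiff.1 hat).2]

lemma pairSum_insert {n : ℕ} {a : Fin n → Fin n → ℝ} (hsym : ∀ j k, a j k = a k j)
    {j : Fin n} {C : Finset (Fin n)} (hj : j ∉ C) :
    pairSum a (insert j C) = pairSum a C + ∑ k ∈ C, a j k := by
  unfold pairSum
  rw [offDiag_insert hj, sum_union (disjoint_left.2 (by grind)),
    sum_union (disjoint_left.2 (by grind)), singleton_product, product_singleton, sum_map, sum_map]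
  simp only [Function.Embedding.coeFn_mk, hsym _ j]
  ring

section Capacity

variable {n : ℕ} (ap am : Fin n → ℝ) (aps ams apo amo : Fin n → Fin n → ℝ)
  {j : Fin n} {C D : Finset (Fin n)}

lemma muPlus_insert_left (hsym : ∀ j k, aps j k = aps k j) (hj : j ∉ C) :
    muPlus ap aps apo (insert j C) D =
      muPlus ap aps apo C D + (ap j + ∑ k ∈ C, aps j k + ∑ k ∈ D, apo j k) := by
  rw [muPlus, muPlus, sum_insert hj, pairSum_insert hsym hj, sum_insert hj]
  ring

lemma muMinus_insert_left (hj : j ∉ C) :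
    muMinus am ams amo (insert j C) D = muMinus am ams amo C D + ∑ k ∈ D, amo j k := by
  rw [muMinus, muMinus, sum_insert hj]
  ring

lemma muPlus_insert_right (hj : j ∉ D) :
    muPlus ap aps apo C (insert j D) = muPlus ap aps apo C D + ∑ k ∈ C, apo k j := by
  simp only [muPlus, sum_insert hj, sum_add_distrib]
  ring

lemma muMinus_insert_right (hsym : ∀ j k, ams j k = ams k j) (hj : j ∉ D) :
    muMinus am ams amo C (insert j D) =
      muMinus am ams amo C D + (am j + ∑ k ∈ D, ams j k + ∑ k ∈ C, amo k j) := by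
  simp only [muMinus, sum_insert hj, pairSum_insert hsym hj, sum_add_distrib]
  ring

noncomputable def muHat (C D : Finset (Fin n)) : ℝ :=
  muPlus ap aps apo C D - muMinus am ams amo C D

lemma muHat_le_muHat_insert_left (hsymp : ∀ j k, aps j k = aps k j)
    (hamo : ∀ j k, j ≠ k → amo j k ≤ 0)
    (h1 : ∀ (j : Fin n) (C D : Finset (Fin n)), j ∉ C → Disjoint (insert j C) D →
        0 ≤ ap j + ∑ k ∈ C, aps j k + ∑ k ∈ D, apo j k)
    (hj : j ∉ C) (hCD : Disjoint (insert j C) D) :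
    muHat ap am aps ams apo amo C D ≤ muHat ap am aps ams apo amo (insert j C) D := by
  have hjD : j ∉ D := disjoint_left.1 hCD (mem_insert_self j C)
  have hneg : ∑ k ∈ D, amo j k ≤ 0 :=
    sum_nonpos fun k hk ↦ hamo j k (ne_of_mem_of_not_mem hk hjD).symm
  have := h1 j C D hj hCD
  rw [muHat, muHat, muPlus_insert_left ap aps apo hsymp hj, muMinus_insert_left am ams amo hj]
  linarith

lemma muHat_insert_right_le_muHat (hsymm : ∀ j k, ams j k = ams k j)
    (hapo : ∀ j k, j ≠ k → apo j k ≤ 0)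
    (h2 : ∀ (j : Fin n) (C D : Finset (Fin n)), j ∉ D → Disjoint C (insert j D) →
        0 ≤ am j + ∑ k ∈ D, ams j k + ∑ k ∈ C, amo k j)
    (hj : j ∉ D) (hCD : Disjoint C (insert j D)) :
    muHat ap am aps ams apo amo C (insert j D) ≤ muHat ap am aps ams apo amo C D := by
  have hjC : j ∉ C := disjoint_right.1 hCD (mem_insert_self j D)
  have hneg : ∑ k ∈ C, apo k j ≤ 0 :=
    sum_nonpos fun k hk ↦ hapo k j (ne_of_mem_of_not_mem hk hjC)
  have := h2 j C D hj hCD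
  rw [muHat, muHat, muPlus_insert_right ap aps apo hj, muMinus_insert_right am ams amo hsymm hj]
  linarith

end Capacity

theorem stmt_17_general {n : ℕ}
    (ap am : Fin n → ℝ) (aps ams apo amo : Fin n → Fin n → ℝ)
    (hsymp : ∀ j k, aps j k = aps k j) (hsymm : ∀ j k, ams j k = ams k j)
    (hapo : ∀ j k, j ≠ k → apo j k ≤ 0) (hamo : ∀ j k, j ≠ k → amo j k ≤ 0)
    (h1 : ∀ (j : Fin n) (C D : Finset (Fin n)), j ∉ C → Disjoint (insert j C) D →
        0 ≤ ap j + ∑ k ∈ C, aps j k + ∑ k ∈ D, apo j k)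
    (h2 : ∀ (j : Fin n) (C D : Finset (Fin n)), j ∉ D → Disjoint C (insert j D) →
        0 ≤ am j + ∑ k ∈ D, ams j k + ∑ k ∈ C, amo k j) :
    ∀ C D E F : Finset (Fin n), Disjoint C D → Disjoint E F →
      E ⊆ C → D ⊆ F →
        muPlus ap aps apo E F - muMinus am ams amo E F ≤
          muPlus ap aps apo C D - muMinus am ams amo C D := by
  intro C D E F hCD hEF hEC hDF
  set μ := muHat ap am aps ams apo amo
  have shrink_right : μ E F ≤ μ E D :=
    le_of_subset_of_le_insert (β := ℝᵒᵈ) (f := fun G ↦ OrderDual.toDual (μ E G)) hDF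
      fun _ G _ hGF haF haG ↦ muHat_insert_right_le_muHat ap am aps ams apo amo hsymm hapo h2 haG
        (hEF.mono_right (insert_subset haF hGF))
  have grow_left : μ E D ≤ μ C D :=
    le_of_subset_of_le_insert (f := (μ · D)) hEC
      fun _ G _ hGC haC haG ↦ muHat_le_muHat_insert_left ap am aps ams apo amo hsymp hamo h1 haG
        (hCD.mono_left (insert_subset haC hGC))
  exact shrink_right.trans grow_left

theorem stmt_17 {n : ℕ} (hn : 1 ≤ n)
    (ap am : Fin n → ℝ) (aps ams apo amo : Fin n → Fin n → ℝ)
    (hap : ∀ j, 0 ≤ ap j) (ham : ∀ j, 0 ≤ am j)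
    (hsymp : ∀ j k, aps j k = aps k j) (hsymm : ∀ j k, ams j k = ams k j)
    (hapo : ∀ j k, j ≠ k → apo j k ≤ 0) (hamo : ∀ j k, j ≠ k → amo j k ≤ 0)
    (h1 : ∀ (j : Fin n) (C D : Finset (Fin n)), j ∉ C → Disjoint (insert j C) D →
        0 ≤ ap j + ∑ k ∈ C, aps j k + ∑ k ∈ D, apo j k)
    (h2 : ∀ (j : Fin n) (C D : Finset (Fin n)), j ∉ D → Disjoint C (insert j D) →
        0 ≤ am j + ∑ k ∈ D, ams j k + ∑ k ∈ C, amo k j) :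
    ∀ C D E F : Finset (Fin n), Disjoint C D → Disjoint E F →
      E ⊆ C → D ⊆ F →
        muPlus ap aps apo E F - muMinus am ams amo E F ≤
          muPlus ap aps apo C D - muMinus am ams amo C D :=
  stmt_17_general ap am aps ams apo amo hsymp hsymm hapo hamo h1 h2
end
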